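/- Cancellation (supersymmetry) property underlying stability under suspension: let x be one additional variable. For every partition I = (i_1 ≤ … ≤ i_l), adjoining the common variable x to both alphabets does not change the Schur function of the difference: S_I((a_1,…,a_m,x);(b_1,…,b_n,x)) = S_I((a_1,…,a_m);(b_1,…,b_n)) as elements of ℤ[a_1,…,a_m,b_1,…,b_n,x]. -/

import Mathlib

open MvPolynomial Finset

/-! ### Auxiliary lemmas -/

section Helpers

variable {S : Type*} [CommRing S]

/-- Recursion for the multiset elementary symmetric function under `cons`. -/
lemma my_esymm_cons (a : S) (s : Multiset S) (j : ℕ) :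
    (a ::ₘ s).esymm (j+1) = s.esymm (j+1) + a * s.esymm j := by
  simp only [Multiset.esymm, Multiset.powersetCard_cons, Multiset.map_add, Multiset.sum_add,
    Multiset.map_map]
  congr 1
  rw [← Multiset.sum_map_mul_left]
  apply congrArg
  apply Multiset.map_congr rfl
  intro t _
  simp [Multiset.prod_cons]

/-- The value of the complete homogeneous symmetric polynomial on a family `f`. -/
noncomputable def HH (σ : Type*) [Fintype σ] [DecidableEq σ] (f : σ → S) (k : ℕ) : S :=
  ∑ s : Sym σ k, (s.1.map f).prod

lemma aeval_hsymm {σ : Type*} [Fintype σ] [DecidableEq σ] [Algebra ℤ S] (f : σ → S) (k : ℕ) :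
    aeval f (hsymm σ ℤ k) = HH σ f k := by
  simp only [hsymm, map_sum, HH]
  refine Finset.sum_congr rfl fun s _ => ?_
  rw [← Multiset.prod_hom _ (aeval f : MvPolynomial σ ℤ →ₐ[ℤ] S), Multiset.map_map]
  simp [Function.comp_def]

lemma HH_equiv {σ τ : Type*} [Fintype σ] [DecidableEq σ] [Fintype τ] [DecidableEq τ]
    (e : σ ≃ τ) (f : τ → S) (k : ℕ) : HH σ (f ∘ e) k = HH τ f k := by
  rw [← aeval_hsymm, ← aeval_hsymm, ← rename_hsymm σ ℤ k e, aeval_rename]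

/-- Recursion for the complete homogeneous symmetric function upon adjoining a variable. -/
lemma HH_rec {τ : Type*} [Fintype τ] [DecidableEq τ] (f : Option τ → S) (k : ℕ) :
    HH (Option τ) f (k+1) = HH τ (f ∘ some) (k+1) + f none * HH (Option τ) f k := by
  unfold HH
  rw [← Equiv.sum_comp (symOptionSuccEquiv (α := τ) (n := k)).symm
    (fun s : Sym (Option τ) (k+1) => (s.1.map f).prod), Fintype.sum_sum_type]
  rw [add_comm]
  congr 1
  · refine Finset.sum_congr rfl fun s _ => ?_
    show (((Sym.map _ s : Sym (Option τ) (k+1)) : Multiset (Option τ)).map f).prod = _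
    rw [Sym.coe_map, Multiset.map_map]
    rfl
  · rw [Finset.mul_sum]
    refine Finset.sum_congr rfl fun s _ => ?_
    show ((((none ::ₛ s) : Sym (Option τ) (k+1)) : Multiset (Option τ)).map f).prod = _
    rw [Sym.coe_cons, Multiset.map_cons, Multiset.prod_cons]
    rfl

/-- The abstract algebraic cancellation: if `E'`/`H'` are obtained from `E`/`H` by
adjoining a common element `x` (with the corresponding recursions), then the
alternating convolutions agree. -/
lemma key (x : S) (E H E' H' : ℕ → S)
    (hE0 : E' 0 = E 0) (hE : ∀ j, E' (j+1) = E (j+1) + x * E j)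
    (hH0 : H' 0 = H 0) (hH : ∀ k, H' (k+1) = H (k+1) + x * H' k) (k : ℕ) :
    ∑ j ∈ Finset.range (k+1), (-1:S)^j * (E' j * H' (k-j))
      = ∑ j ∈ Finset.range (k+1), (-1:S)^j * (E j * H (k-j)) := by
  set T : ℕ → S := fun k => ∑ j ∈ Finset.range (k+1), (-1:S)^j * (E j * H' (k-j)) with hT
  have hb : ∀ k, T (k+1)
      = (∑ j ∈ Finset.range (k+2), (-1:S)^j * (E j * H (k+1-j))) + x * T k := by
    intro k
    have h1 : ∀ j ∈ Finset.range (k+1), (-1:S)^j * (E j * H' (k+1-j))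
        = (-1:S)^j * (E j * H (k+1-j)) + x * ((-1:S)^j * (E j * H' (k-j))) := by
      intro j hj
      have hj' : j ≤ k := Nat.lt_succ_iff.mp (Finset.mem_range.mp hj)
      have h2 : k+1-j = (k-j)+1 := by omega
      rw [h2, hH, ← h2]
      ring
    rw [hT]
    simp only
    rw [Finset.sum_range_succ, Finset.sum_congr rfl h1, Finset.sum_add_distrib,
      Finset.sum_range_succ (n := k+1), ← Finset.mul_sum]
    simp only [Nat.sub_self, hH0]
    ring
  have ha : ∀ k, ∑ j ∈ Finset.range (k+2), (-1:S)^j * (E' j * H' (k+1-j))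
      = T (k+1) - x * T k := by
    intro k
    rw [Finset.sum_range_succ' (fun j => (-1:S)^j * (E' j * H' (k+1-j))) (k+1)]
    have h1 : ∀ j ∈ Finset.range (k+1), (-1:S)^(j+1) * (E' (j+1) * H' (k+1-(j+1)))
        = (-1:S)^(j+1) * (E (j+1) * H' (k-j)) + (-x) * ((-1:S)^j * (E j * H' (k-j))) := by
      intro j hj
      have h2 : k+1-(j+1) = k-j := by omega
      rw [h2, hE]
      ring
    rw [Finset.sum_congr rfl h1, Finset.sum_add_distrib, ← Finset.mul_sum]
    have h3 : T (k+1) = (∑ j ∈ Finset.range (k+1), (-1:S)^(j+1) * (E (j+1) * H' (k-j)))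
        + (-1:S)^0 * (E 0 * H' (k+1-0)) := by
      rw [hT]
      simp only
      rw [Finset.sum_range_succ' (fun j => (-1:S)^j * (E j * H' (k+1-j))) (k+1)]
      congr 1
      refine Finset.sum_congr rfl fun j hj => ?_
      have h2 : k+1-(j+1) = k-j := by omega
      rw [h2]
    rw [h3, hE0, hT]
    ring
  cases k with
  | zero => simp [hE0, hH0]
  | succ k =>
    rw [show k+1+1 = k+2 from rfl] at *
    rw [ha k, hb k]
    ring

/-- The multiset of values of a family over `Fin (n+1)` splits off the last value. -/
lemma univ_val_map_succ {α : Type*} {n : ℕ} (f : Fin (n+1) → α) :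
    (univ : Finset (Fin (n+1))).val.map f
      = f (Fin.last n) ::ₘ (univ : Finset (Fin n)).val.map (f ∘ Fin.castSucc) := by
  have h : (univ : Finset (Fin (n+1)))
      = (univ : Finset (Option (Fin n))).map finSuccEquivLast.symm.toEmbedding :=
    (Finset.univ_map_equiv_to_embedding _).symm
  rw [h, Finset.map_val, Multiset.map_map, univ_option]
  show Multiset.map _
    ((Finset.cons none (Finset.map Function.Embedding.some univ) (by simp)).val) = _
  rw [Finset.cons_val, Multiset.map_cons, Finset.map_val, Multiset.map_map]
  congr 1
  apply Multiset.map_congr rfl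
  intro b _
  simp

end Helpers

/-- The coefficient `s_k(a;b)` of the Segre series
`∏_j (1 - b_j t) / ∏_i (1 - a_i t)`, i.e.
`s_k = ∑_{j} (-1)^j e_j(b) h_{k-j}(a)` for `k ≥ 0`, and `0` for `k < 0`.
Here the `a`-alphabet is indexed by `Sum.inl` and the `b`-alphabet by `Sum.inr`. -/
noncomputable def sDiff (m n : ℕ) (k : ℤ) : MvPolynomial (Fin m ⊕ Fin n) ℤ :=
  if 0 ≤ k then
    ∑ j ∈ Finset.range (k.toNat + 1),
      ((-1 : ℤ) ^ j) •
        (rename Sum.inr (esymm (Fin n) ℤ j) *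
          rename Sum.inl (hsymm (Fin m) ℤ (k.toNat - j)))
  else 0

/-- The Schur function `S_I(a;b)` of a difference of alphabets, defined by the
determinant `det(s_{i_p + p - q}(a;b))_{1 ≤ p,q ≤ l}` for a partition
`I = (i_1 ≤ … ≤ i_l)`. -/
noncomputable def schurDiff (m n l : ℕ) (i : Fin l → ℕ) :
    MvPolynomial (Fin m ⊕ Fin n) ℤ :=
  Matrix.det (Matrix.of fun p q : Fin l => sDiff m n ((i p : ℤ) + (p : ℕ) - (q : ℕ)))

/-- Cancellation for the individual Segre coefficients. -/
lemma sDiff_cancel (m n : ℕ) (k : ℤ) :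
    rename (Sum.elim
        (fun a : Fin (m + 1) =>
          if h : (a : ℕ) < m then some (Sum.inl ⟨(a : ℕ), h⟩) else none)
        (fun b : Fin (n + 1) =>
          if h : (b : ℕ) < n then some (Sum.inr ⟨(b : ℕ), h⟩) else none))
      (sDiff (m + 1) (n + 1) k) = rename some (sDiff m n k) := by
  set fa : Fin (m+1) → Option (Fin m ⊕ Fin n) := fun a =>
    if h : (a : ℕ) < m then some (Sum.inl ⟨(a : ℕ), h⟩) else none with hfa
  set fb : Fin (n+1) → Option (Fin m ⊕ Fin n) := fun b =>
    if h : (b : ℕ) < n then some (Sum.inr ⟨(b : ℕ), h⟩) else none with hfb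
  by_cases hk : 0 ≤ k
  · unfold sDiff
    rw [if_pos hk, if_pos hk, map_sum, map_sum]
    set K := k.toNat
    set S := MvPolynomial (Option (Fin m ⊕ Fin n)) ℤ
    set x : S := X none with hx
    set E' : ℕ → S := fun j => rename fb (esymm (Fin (n+1)) ℤ j) with hE'
    set H' : ℕ → S := fun j => rename fa (hsymm (Fin (m+1)) ℤ j) with hH'
    set E : ℕ → S := fun j => rename (some ∘ Sum.inr) (esymm (Fin n) ℤ j) with hE
    set H : ℕ → S := fun j => rename (some ∘ Sum.inl) (hsymm (Fin m) ℤ j) with hH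
    have hMb : (univ : Finset (Fin (n+1))).val.map (X ∘ fb)
        = (x ::ₘ (univ : Finset (Fin n)).val.map (X ∘ (some ∘ Sum.inr)) :
            Multiset S) := by
      rw [univ_val_map_succ]
      congr 1
      · simp [hfb, hx]
      · apply Multiset.map_congr rfl
        intro b _
        simp [hfb, Fin.coe_castSucc, b.isLt, Function.comp_def]
    have hEfact : ∀ j, E' j = ((univ : Finset (Fin (n+1))).val.map (X ∘ fb)).esymm j :=
      fun j => by rw [hE']; simp only; rw [rename_eq_aeval]; exact aeval_esymm_eq_multiset_esymm _ _ j (X ∘ fb)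
    have hEfact2 : ∀ j, E j
        = ((univ : Finset (Fin n)).val.map (X ∘ (some ∘ Sum.inr))).esymm j :=
      fun j => by rw [hE]; simp only; rw [rename_eq_aeval]; exact aeval_esymm_eq_multiset_esymm _ _ j _
    have hrecE : ∀ j, E' (j+1) = E (j+1) + x * E j := by
      intro j
      rw [hEfact, hEfact2, hEfact2, hMb, my_esymm_cons]
    have hE0 : E' 0 = E 0 := by
      simp [hE', hE, esymm_zero]
    have hgf : ((X ∘ fa) ∘ finSuccEquivLast.symm : Option (Fin m) → S) ∘ finSuccEquivLast
        = X ∘ fa := by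
      funext a; simp
    have hH'HH : ∀ j, H' j = HH (Option (Fin m)) ((X ∘ fa) ∘ finSuccEquivLast.symm) j := by
      intro j
      rw [hH']
      simp only; rw [rename_eq_aeval]
      show aeval (X ∘ fa) (hsymm (Fin (m+1)) ℤ j) = _
      rw [aeval_hsymm, ← HH_equiv finSuccEquivLast ((X ∘ fa) ∘ finSuccEquivLast.symm) j, hgf]
    have hHHH : ∀ j, H j = HH (Fin m) (X ∘ (some ∘ Sum.inl)) j := by
      intro j
      rw [hH]
      simp only; rw [rename_eq_aeval]
      show aeval (X ∘ (some ∘ Sum.inl)) (hsymm (Fin m) ℤ j) = _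
      rw [aeval_hsymm]
    have hrecH : ∀ j, H' (j+1) = H (j+1) + x * H' j := by
      intro j
      rw [hH'HH, hH'HH, hHHH, HH_rec]
      have h1 : ((X ∘ fa) ∘ finSuccEquivLast.symm) ∘ some
          = (X ∘ (some ∘ Sum.inl) : Fin m → MvPolynomial (Option (Fin m ⊕ Fin n)) ℤ) := by
        funext a
        simp [hfa, Function.comp_def, a.isLt]
      have h2 : ((X ∘ fa) ∘ finSuccEquivLast.symm) none
          = (x : MvPolynomial (Option (Fin m ⊕ Fin n)) ℤ) := by
        simp [hfa, hx]
      rw [h1, h2]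
    have hH0 : H' 0 = H 0 := by
      simp [hH', hH, hsymm_zero]
    have conv1 : ∀ (j : ℕ) (p : S), ((-1 : ℤ)^j) • p = (-1 : S)^j * p := by
      intro j p
      rw [zsmul_eq_mul]
      push_cast
      ring
    calc ∑ j ∈ Finset.range (K + 1), (rename (Sum.elim fa fb))
            (((-1:ℤ)^j) • (rename Sum.inr (esymm (Fin (n+1)) ℤ j) *
              rename Sum.inl (hsymm (Fin (m+1)) ℤ (K - j))))
        = ∑ j ∈ Finset.range (K + 1), (-1:S)^j * (E' j * H' (K - j)) := by
          refine Finset.sum_congr rfl fun j _ => ?_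
          rw [map_smul, map_mul, rename_rename, rename_rename, Sum.elim_comp_inr,
            Sum.elim_comp_inl, conv1]
      _ = ∑ j ∈ Finset.range (K + 1), (-1:S)^j * (E j * H (K - j)) :=
          key x E H E' H' hE0 hrecE hH0 hrecH K
      _ = ∑ j ∈ Finset.range (K + 1), (rename some)
            (((-1:ℤ)^j) • (rename Sum.inr (esymm (Fin n) ℤ j) *
              rename Sum.inl (hsymm (Fin m) ℤ (K - j)))) := by
          refine Finset.sum_congr rfl fun j _ => ?_
          rw [map_smul, map_mul, rename_rename, rename_rename, conv1]
  · unfold sDiff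
    rw [if_neg hk, if_neg hk, map_zero, map_zero]

/-- **Cancellation (supersymmetry) property**: adjoining a common extra variable
`x` to both alphabets does not change the Schur function of the difference:
`S_I((a,x);(b,x)) = S_I(a;b)` in `ℤ[a_1,…,a_m,b_1,…,b_n,x]`.
The ambient ring has variables `Option (Fin m ⊕ Fin n)`, with `none`
playing the role of the extra variable `x`; the last variable of each of the
enlarged alphabets (of sizes `m+1` and `n+1`) is sent to `x = none`. -/
theorem schur_cancellation (m n l : ℕ) (i : Fin l → ℕ) (hmono : Monotone i) :
    MvPolynomial.rename
        (Sum.elim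
          (fun a : Fin (m + 1) =>
            if h : (a : ℕ) < m then some (Sum.inl ⟨(a : ℕ), h⟩) else none)
          (fun b : Fin (n + 1) =>
            if h : (b : ℕ) < n then some (Sum.inr ⟨(b : ℕ), h⟩) else none))
        (schurDiff (m + 1) (n + 1) l i)
      = MvPolynomial.rename some (schurDiff m n l i) := by
  unfold schurDiff
  rw [AlgHom.map_det, AlgHom.map_det]
  congr 1
  apply Matrix.ext
  intro p q
  exact sDiff_cancel m n ((i p : ℤ) + (p : ℕ) - (q : ℕ))
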